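/- Let H and G be finite simple graphs such that |E(G)| ≥ |E(H)| − 1, and let e = {u,v} be an isolated edge of H, i.e., {u,v} together with the edge e forms a connected component of H. Then |EdgInj(H,G)| = 2·(|E(G)| − |E(H)| + 1)·|EdgInj(H − u − v, G)|, where H − u − v is the graph H with the vertices u and v deleted. -/
import Mathlib

open SimpleGraph

private lemma count_pairs {VG : Type*} [Fintype VG] [DecidableEq VG] (G : SimpleGraph VG)
    [DecidableRel G.Adj] (T : Finset (Sym2 VG)) (hT : T ⊆ G.edgeFinset) :
    Nat.card {p : VG × VG // G.Adj p.1 p.2 ∧ s(p.1, p.2) ∉ T} =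
      2 * (G.edgeFinset.card - T.card) := by
  classical
  have key := (G.deleteEdges ↑T).two_mul_card_edgeFinset
  rw [SimpleGraph.edgeFinset_deleteEdges, Finset.card_sdiff_of_subset hT] at key
  rw [Nat.card_eq_fintype_card, Fintype.card_subtype, key]
  congr 1
  ext ⟨a, b⟩
  simp

private lemma nat_card_sigma_const {ι : Type*} [Finite ι] (F : ι → Type*) [∀ i, Finite (F i)]
    (c : ℕ) (h : ∀ i, Nat.card (F i) = c) : Nat.card (Σ i, F i) = Nat.card ι * c := by
  cases nonempty_fintype ι
  have : ∀ i, Fintype (F i) := fun i => Fintype.ofFinite _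
  rw [Nat.card_eq_fintype_card, Fintype.card_sigma]
  have h' : ∀ i, Fintype.card (F i) = c := fun i => by rw [← Nat.card_eq_fintype_card, h]
  simp [h', Nat.card_eq_fintype_card, Finset.sum_const, Finset.card_univ, mul_comm]

/-- A homomorphism `φ : H →g G` is *edge-injective* if distinct edges of `H`
are mapped to distinct edges of `G`. -/
def EdgeInjective {V W : Type*} {H : SimpleGraph V} {G : SimpleGraph W} (φ : H →g G) : Prop :=
  ∀ e ∈ H.edgeSet, ∀ f ∈ H.edgeSet, Sym2.map φ e = Sym2.map φ f → e = f

/-- If `{u,v}` is an isolated edge of `H` (the component of `u` and `v` is exactly this edge)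
and `|E(G)| ≥ |E(H)| − 1`, then
`|EdgInj(H,G)| = 2·(|E(G)| − |E(H)| + 1)·|EdgInj(H − u − v, G)|`. -/
theorem edgeInjective_isolated_edge
    {VH VG : Type*} [Fintype VH] [DecidableEq VH] [Fintype VG] [DecidableEq VG]
    (H : SimpleGraph VH) (G : SimpleGraph VG)
    [DecidableRel H.Adj] [DecidableRel G.Adj]
    (u v : VH) (huv : H.Adj u v)
    (hu : ∀ w, H.Adj u w → w = v) (hv : ∀ w, H.Adj v w → w = u)
    (hcard : H.edgeFinset.card ≤ G.edgeFinset.card + 1) :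
    Nat.card {φ : H →g G // EdgeInjective φ} =
      2 * (G.edgeFinset.card + 1 - H.edgeFinset.card) *
        Nat.card {φ : (H.induce {w | w ≠ u ∧ w ≠ v}) →g G // EdgeInjective φ} := by
  classical
  set S : Set VH := {w | w ≠ u ∧ w ≠ v} with hS
  set H' : SimpleGraph S := H.induce S with hH'
  have hvu : v ≠ u := huv.ne'
  -- embedded edges of H' are edges of H
  have emb_mem : ∀ e ∈ H'.edgeSet, Sym2.map Subtype.val e ∈ H.edgeSet := by
    intro e he
    induction e using Sym2.ind with
    | _ a b => exact he
  have emb_inj : Function.Injective (Sym2.map (Subtype.val : S → VH)) :=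
    Sym2.map.injective Subtype.val_injective
  have emb_ne : ∀ e : Sym2 S, Sym2.map Subtype.val e ≠ s(u, v) := by
    intro e h
    induction e using Sym2.ind with
    | _ a b =>
      rw [Sym2.map_pair_eq, Sym2.eq_iff] at h
      rcases h with ⟨h1, _⟩ | ⟨h1, _⟩
      · exact a.2.1 h1
      · exact a.2.2 h1
  have edge_char : ∀ e ∈ H.edgeSet,
      e = s(u, v) ∨ ∃ e' ∈ H'.edgeSet, e = Sym2.map Subtype.val e' := by
    intro e he
    induction e using Sym2.ind with
    | _ a b =>
      rw [SimpleGraph.mem_edgeSet] at he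
      by_cases hau : a = u
      · left; rw [hau]; rw [hau] at he; rw [hu b he]
      by_cases hav : a = v
      · left; rw [hav]; rw [hav] at he; rw [hv b he, Sym2.eq_swap]
      · have hbu : b ≠ u := fun h => hav (hu a (h ▸ he.symm))
        have hbv : b ≠ v := fun h => hau (hv a (h ▸ he.symm))
        right
        exact ⟨s(⟨a, ⟨hau, hav⟩⟩, ⟨b, ⟨hbu, hbv⟩⟩), he, rfl⟩
  -- the edge finset of H is the embedded edges of H' plus s(u,v)
  have hedgeH : H.edgeFinset = insert s(u, v) (H'.edgeFinset.image (Sym2.map Subtype.val)) := by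
    ext e
    simp only [Finset.mem_insert, Finset.mem_image, SimpleGraph.mem_edgeFinset]
    constructor
    · intro he
      rcases edge_char e he with h | ⟨e', he', rfl⟩
      · exact Or.inl h
      · exact Or.inr ⟨e', he', rfl⟩
    · rintro (rfl | ⟨e', he', rfl⟩)
      · exact huv
      · exact emb_mem e' he'
  have hcardH : H.edgeFinset.card = H'.edgeFinset.card + 1 := by
    rw [hedgeH, Finset.card_insert_of_notMem, Finset.card_image_of_injective _ emb_inj]
    simp only [Finset.mem_image, not_exists, not_and]
    exact fun e' _ => emb_ne e'
  -- restriction of a hom to H'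
  let res : (H →g G) → (H' →g G) := fun φ => ⟨fun x => φ x.val, fun hab => φ.map_rel hab⟩
  have res_map : ∀ (φ : H →g G) (e : Sym2 S),
      Sym2.map (res φ) e = Sym2.map φ (Sym2.map Subtype.val e) := by
    intro φ e
    induction e using Sym2.ind with
    | _ a b => rfl
  have res_inj : ∀ φ : H →g G, EdgeInjective φ → EdgeInjective (res φ) := by
    intro φ hφ e he f hf hm
    apply emb_inj
    apply hφ _ (emb_mem e he) _ (emb_mem f hf)
    rw [← res_map, ← res_map, hm]
  have pair_prop : ∀ (φ : H →g G), EdgeInjective φ →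
      G.Adj (φ u) (φ v) ∧ s(φ u, φ v) ∉ H'.edgeFinset.image (Sym2.map (res φ)) := by
    intro φ hφ
    refine ⟨φ.map_rel huv, ?_⟩
    simp only [Finset.mem_image, SimpleGraph.mem_edgeFinset, not_exists, not_and]
    intro e' he' h
    have h2 : Sym2.map φ (Sym2.map Subtype.val e') = Sym2.map φ s(u, v) := by
      rw [← res_map, h, Sym2.map_pair_eq]
    exact emb_ne e' (hφ _ (emb_mem e' he') _ (H.mem_edgeSet.mpr huv) h2)
  -- extension of a hom of H' by a choice of an oriented edge
  let ext : (H' →g G) → VG → VG → (VH → VG) := fun ψ a b w =>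
    if h1 : w = u then a else if h2 : w = v then b else ψ ⟨w, h1, h2⟩
  have ext_u : ∀ ψ a b, ext ψ a b u = a := fun ψ a b => dif_pos rfl
  have ext_v : ∀ ψ a b, ext ψ a b v = b := by
    intro ψ a b
    show (if h1 : v = u then a else if h2 : v = v then b else ψ ⟨v, h1, h2⟩) = b
    rw [dif_neg hvu, dif_pos rfl]
  have ext_mem : ∀ ψ a b (x : S), ext ψ a b x.val = ψ x := by
    rintro ψ a b ⟨x, hx1, hx2⟩
    show (if h1 : x = u then a else if h2 : x = v then b else ψ ⟨x, h1, h2⟩) = _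
    rw [dif_neg hx1, dif_neg hx2]
  have ext_hom : ∀ (ψ : H' →g G) (a b : VG), G.Adj a b →
      ∀ {w w'}, H.Adj w w' → G.Adj (ext ψ a b w) (ext ψ a b w') := by
    intro ψ a b hab w w' hww'
    by_cases hwu : w = u
    · subst hwu
      have h := hu w' hww'
      subst h
      rw [ext_u, ext_v]; exact hab
    by_cases hwv : w = v
    · subst hwv
      have h := hv w' hww'
      subst h
      rw [ext_v, ext_u]; exact hab.symm
    · have hw'u : w' ≠ u := fun h => hwv (hu w (h ▸ hww').symm)
      have hw'v : w' ≠ v := fun h => hwu (hv w (h ▸ hww').symm)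
      have hadj := ψ.map_rel (show H'.Adj ⟨w, hwu, hwv⟩ ⟨w', hw'u, hw'v⟩ from hww')
      rw [← ext_mem ψ a b ⟨w, hwu, hwv⟩, ← ext_mem ψ a b ⟨w', hw'u, hw'v⟩] at hadj
      exact hadj
  have ext_map : ∀ ψ a b (e : Sym2 S),
      Sym2.map (ext ψ a b) (Sym2.map Subtype.val e) = Sym2.map ψ e := by
    intro ψ a b e
    induction e using Sym2.ind with
    | _ x y => rw [Sym2.map_pair_eq, Sym2.map_pair_eq, Sym2.map_pair_eq, ext_mem, ext_mem]
  have ext_uv : ∀ ψ a b, Sym2.map (ext ψ a b) s(u, v) = s(a, b) := by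
    intro ψ a b
    rw [Sym2.map_pair_eq, ext_u, ext_v]
  have key : ∀ (ψ : H' →g G) (a b : VG), EdgeInjective ψ →
      s(a, b) ∉ H'.edgeFinset.image (Sym2.map ψ) →
      ∀ e ∈ H.edgeSet, ∀ f ∈ H.edgeSet,
        Sym2.map (ext ψ a b) e = Sym2.map (ext ψ a b) f → e = f := by
    intro ψ a b hψ hnot e he f hf hm
    rcases edge_char e he with rfl | ⟨e', he', rfl⟩ <;>
      rcases edge_char f hf with rfl | ⟨f', hf', rfl⟩
    · rfl
    · exfalso
      apply hnot
      rw [ext_uv, ext_map] at hm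
      exact Finset.mem_image.mpr ⟨f', SimpleGraph.mem_edgeFinset.mpr hf', hm.symm⟩
    · exfalso
      apply hnot
      rw [ext_uv, ext_map] at hm
      exact Finset.mem_image.mpr ⟨e', SimpleGraph.mem_edgeFinset.mpr he', hm⟩
    · rw [ext_map, ext_map] at hm
      exact congrArg _ (hψ _ he' _ hf' hm)
  -- the fiber type
  let Fib : (H' →g G) → Type _ := fun ψ =>
    {p : VG × VG // G.Adj p.1 p.2 ∧ s(p.1, p.2) ∉ H'.edgeFinset.image (Sym2.map ψ)}
  -- the bijection
  let equiv : {φ : H →g G // EdgeInjective φ} ≃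
      Σ ψ : {ψ : H' →g G // EdgeInjective ψ}, Fib ψ.1 :=
    { toFun := fun φ => ⟨⟨res φ.1, res_inj φ.1 φ.2⟩, ⟨(φ.1 u, φ.1 v), pair_prop φ.1 φ.2⟩⟩
      invFun := fun q =>
        ⟨⟨ext q.1.1 q.2.1.1 q.2.1.2, fun h => ext_hom _ _ _ q.2.2.1 h⟩,
          key _ _ _ q.1.2 q.2.2.2⟩
      left_inv := by
        rintro ⟨φ, hφ⟩
        apply Subtype.ext
        apply DFunLike.ext
        intro w
        show ext (res φ) (φ u) (φ v) w = φ w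
        by_cases hwu : w = u
        · subst hwu; exact ext_u _ _ _
        by_cases hwv : w = v
        · subst hwv; exact ext_v _ _ _
        · exact ext_mem _ _ _ ⟨w, hwu, hwv⟩
      right_inv := by
        rintro ⟨⟨ψ, hψ⟩, ⟨⟨a, b⟩, hab⟩⟩
        have h1 : res ⟨ext ψ a b, fun h => ext_hom _ _ _ hab.1 h⟩ = ψ :=
          DFunLike.ext _ _ fun x => ext_mem ψ a b x
        refine Sigma.ext (Subtype.ext h1) ?_
        refine (Subtype.heq_iff_coe_eq ?_).mpr ?_
        · intro p
          simp only [h1]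
        · exact Prod.ext (ext_u ψ a b) (ext_v ψ a b) }
  -- counting
  have : Finite (H' →g G) := Finite.of_injective (fun φ => (φ : S → VG)) DFunLike.coe_injective
  have fib_card : ∀ ψ : {ψ : H' →g G // EdgeInjective ψ},
      Nat.card (Fib ψ.1) = 2 * (G.edgeFinset.card - H'.edgeFinset.card) := by
    rintro ⟨ψ, hψ⟩
    have hTsub : H'.edgeFinset.image (Sym2.map ψ) ⊆ G.edgeFinset := by
      intro e he
      obtain ⟨e', he', rfl⟩ := Finset.mem_image.mp he
      rw [SimpleGraph.mem_edgeFinset] at he' ⊢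
      exact ψ.map_mem_edgeSet he'
    have hTcard : (H'.edgeFinset.image (Sym2.map ψ)).card = H'.edgeFinset.card :=
      Finset.card_image_of_injOn fun e he f hf =>
        hψ e (SimpleGraph.mem_edgeFinset.mp he) f (SimpleGraph.mem_edgeFinset.mp hf)
    rw [count_pairs G _ hTsub, hTcard]
  rw [Nat.card_congr equiv,
    nat_card_sigma_const _ (2 * (G.edgeFinset.card - H'.edgeFinset.card)) fib_card, hcardH,
    Nat.add_sub_add_right]
  ring
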